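/- arXiv:2301.01716 — 2 statements merged into one kernel-verified Lean document; each statement's English description precedes it below -/
import Mathlib

section
/- Assume f is L_f-Lipschitz on X × Y, f̃*_hi = sup_{x∈X} f̃*(x) is finite, the error-bound assumption holds with constants θ̄ > 0 and function ω, and μ ≥ (f̃*_hi − f̃_low)/θ̄². Then f*_μ ≤ f* + L_f · ω( √( μ⁻¹( f̃*_hi − f̃_low ) ) ). -/
noncomputable section

open Set

open scoped RealInnerProductSpace

/-- Euclidean space `ℝⁿ`. -/
abbrev En (n : ℕ) := EuclideanSpace ℝ (Fin n)

/-- Componentwise positive part `[v]₊` of a vector `v ∈ ℝˡ`. -/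
def posPart {l : ℕ} (v : En l) : En l := WithLp.toLp 2 (fun i => max (v i) 0)

/-- The Euclidean distance `‖(x,y) − (x',y')‖` on `ℝⁿ × ℝᵐ`. -/
def prodDist {n m : ℕ} (p q : En n × En m) : ℝ :=
  Real.sqrt (‖p.1 - q.1‖ ^ 2 + ‖p.2 - q.2‖ ^ 2)

/-- `φ` is `L`-Lipschitz on `X × Y` (with the Euclidean norm on `ℝⁿ × ℝᵐ`). -/
def LipOnXY {n m : ℕ} (φ : En n × En m → ℝ) (L : ℝ)
    (X : Set (En n)) (Y : Set (En m)) : Prop :=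
  ∀ p ∈ X ×ˢ Y, ∀ q ∈ X ×ˢ Y, |φ p - φ q| ≤ L * prodDist p q

/-- The Slater condition with constant `G`. -/
def Slater {n m l : ℕ} (gt : En n × En m → En l) (X : Set (En n)) (Y : Set (En m))
    (G : ℝ) : Prop :=
  ∀ x ∈ X, ∃ zhat ∈ Y, ∀ i, gt (x, zhat) i ≤ -G

/-- The lower-level value function `f̃*(x) = inf { f̃(x,z) : z ∈ Y, g̃(x,z) ≤ 0 }`. -/
def ftStar {n m l : ℕ} (ft : En n × En m → ℝ) (gt : En n × En m → En l)
    (Y : Set (En m)) (x : En n) : ℝ :=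
  sInf {v | ∃ z ∈ Y, (∀ i, gt (x, z) i ≤ 0) ∧ v = ft (x, z)}

/-- `f̃*_hi = sup_{x ∈ X} f̃*(x)`. -/
def ftStarHi {n m l : ℕ} (ft : En n × En m → ℝ) (gt : En n × En m → En l)
    (X : Set (En n)) (Y : Set (En m)) : ℝ :=
  sSup {v | ∃ x ∈ X, v = ftStar ft gt Y x}

/-- `f̃_low = inf { f̃(x,y) : (x,y) ∈ X × Y }`. -/
def ftLow {n m : ℕ} (ft : En n × En m → ℝ) (X : Set (En n)) (Y : Set (En m)) : ℝ :=
  sInf {v | ∃ x ∈ X, ∃ y ∈ Y, v = ft (x, y)}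

/-- `f̃_hi = sup { f̃(x,y) : (x,y) ∈ X × Y }`. -/
def ftHi {n m : ℕ} (ft : En n × En m → ℝ) (X : Set (En n)) (Y : Set (En m)) : ℝ :=
  sSup {v | ∃ x ∈ X, ∃ y ∈ Y, v = ft (x, y)}

/-- `f_low = inf { f(x,y) : (x,y) ∈ X × Y }`. -/
def fLow {n m : ℕ} (f : En n × En m → ℝ) (X : Set (En n)) (Y : Set (En m)) : ℝ :=
  sInf {v | ∃ x ∈ X, ∃ y ∈ Y, v = f (x, y)}

/-- `g̃_hi = sup { ‖g̃(x,y)‖ : (x,y) ∈ X × Y }`. -/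
def gtHi {n m l : ℕ} (gt : En n × En m → En l) (X : Set (En n)) (Y : Set (En m)) : ℝ :=
  sSup {v | ∃ x ∈ X, ∃ y ∈ Y, v = ‖gt (x, y)‖}

/-- The lower-level penalty function `P̃_μ(x,z) = f̃(x,z) + μ ‖[g̃(x,z)]₊‖²`. -/
def Ptilde {n m l : ℕ} (ft : En n × En m → ℝ) (gt : En n × En m → En l)
    (μ : ℝ) (x : En n) (z : En m) : ℝ :=
  ft (x, z) + μ * ‖posPart (gt (x, z))‖ ^ 2

/-- `inf_{z ∈ Y} P̃_μ(x,z)`. -/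
def PtildeMinVal {n m l : ℕ} (ft : En n × En m → ℝ) (gt : En n × En m → En l)
    (Y : Set (En m)) (μ : ℝ) (x : En n) : ℝ :=
  sInf {w | ∃ z ∈ Y, w = Ptilde ft gt μ x z}

/-- The minimax penalty function `P_{ρ,μ}(x,y,z) = f(x,y) + ρ (P̃_μ(x,y) − P̃_μ(x,z))`. -/
def Prhomu {n m l : ℕ} (f ft : En n × En m → ℝ) (gt : En n × En m → En l)
    (ρ μ : ℝ) (x : En n) (y z : En m) : ℝ :=
  f (x, y) + ρ * (Ptilde ft gt μ x y - Ptilde ft gt μ x z)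

/-- `sup_{z ∈ Y} P_{ρ,μ}(x,y,z)`. -/
def maxPc {n m l : ℕ} (f ft : En n × En m → ℝ) (gt : En n × En m → En l)
    (Y : Set (En m)) (ρ μ : ℝ) (x : En n) (y : En m) : ℝ :=
  sSup {v | ∃ z ∈ Y, v = Prhomu f ft gt ρ μ x y z}

/-- `inf_{(x,y)∈X×Y} sup_{z∈Y} P_{ρ,μ}(x,y,z)`. -/
def minimaxValc {n m l : ℕ} (f ft : En n × En m → ℝ) (gt : En n × En m → En l)
    (X : Set (En n)) (Y : Set (En m)) (ρ μ : ℝ) : ℝ :=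
  sInf {v | ∃ x ∈ X, ∃ y ∈ Y, v = maxPc f ft gt Y ρ μ x y}

/-- `(x,y,z)` is an ε-optimal solution of `min_{(x,y)∈X×Y} max_{z∈Y} P_{ρ,μ}(x,y,z)`. -/
def epsOptimalc {n m l : ℕ} (f ft : En n × En m → ℝ) (gt : En n × En m → En l)
    (X : Set (En n)) (Y : Set (En m)) (ρ μ ε : ℝ) (x : En n) (y z : En m) : Prop :=
  maxPc f ft gt Y ρ μ x y - Prhomu f ft gt ρ μ x y z ≤ ε ∧
  Prhomu f ft gt ρ μ x y z - minimaxValc f ft gt X Y ρ μ ≤ ε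

/-- The constrained bilevel optimal value
`f* = inf { f(x,y) : x ∈ X, y ∈ Y, g̃(x,y) ≤ 0, f̃(x,y) = f̃*(x) }`. -/
def fStarC {n m l : ℕ} (f ft : En n × En m → ℝ) (gt : En n × En m → En l)
    (X : Set (En n)) (Y : Set (En m)) : ℝ :=
  sInf {v | ∃ x ∈ X, ∃ y ∈ Y,
    (∀ i, gt (x, y) i ≤ 0) ∧ ft (x, y) = ftStar ft gt Y x ∧ v = f (x, y)}

/-- The penalized bilevel optimal value
`f*_μ = inf { f(x,y) : x ∈ X, y ∈ Y, P̃_μ(x,y) = inf_{z∈Y} P̃_μ(x,z) }`. -/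
def fStarMu {n m l : ℕ} (f ft : En n × En m → ℝ) (gt : En n × En m → En l)
    (X : Set (En n)) (Y : Set (En m)) (μ : ℝ) : ℝ :=
  sInf {v | ∃ x ∈ X, ∃ y ∈ Y, Ptilde ft gt μ x y = PtildeMinVal ft gt Y μ x ∧ v = f (x, y)}

/-- The set `S_θ(x)` of θ-approximately feasible lower-level minimizers. -/
def Sθ {n m l : ℕ} (ft : En n × En m → ℝ) (gt : En n × En m → En l)
    (Y : Set (En m)) (θ : ℝ) (x : En n) : Set (En m) :=
  {z | z ∈ Y ∧ ‖posPart (gt (x, z))‖ ≤ θ ∧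
    ft (x, z) = sInf {w | ∃ z' ∈ Y, ‖posPart (gt (x, z'))‖ ≤ θ ∧ w = ft (x, z')}}

/-- The error-bound assumption with constants `θbar` and function `ω`. -/
def ErrorBound {n m l : ℕ} (ft : En n × En m → ℝ) (gt : En n × En m → En l)
    (X : Set (En n)) (Y : Set (En m)) (θbar : ℝ) (ω : ℝ → ℝ) : Prop :=
  0 < θbar ∧ (∀ t, 0 ≤ t → 0 ≤ ω t) ∧ (∀ a b, 0 ≤ a → a ≤ b → ω a ≤ ω b) ∧
    Filter.Tendsto ω (nhdsWithin 0 (Set.Ioi 0)) (nhds 0) ∧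
    ∀ x ∈ X, ∀ z ∈ Sθ ft gt Y 0 x, ∀ θ ∈ Set.Icc 0 θbar,
      Metric.infDist z (Sθ ft gt Y θ x) ≤ ω θ


/-!
Fix a bilevel-feasible pair `(x, y)`, so `y ∈ S₀(x)`, and a minimizer `z` of `P̃_μ(x, ·)` on `Y`,
with violation `σ = ‖[g̃(x, z)]₊‖`. Comparing `P̃_μ(x, z)` with the value at a feasible point gives
`f̃(x, z) + μ σ² ≤ f̃*(x)`, hence `μ σ² ≤ f̃*_hi − f̃_low` and `σ ≤ θ := √(μ⁻¹ (f̃*_hi − f̃_low)) ≤ θ̄`.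
Moreover `z ∈ S_σ(x)`, and every point of `S_σ(x)` is again a minimizer of `P̃_μ(x, ·)`.
The error bound puts such points within `ω(σ) ≤ ω(θ)` of `y`, and the Lipschitz bound on `f`
turns this into `f*_μ ≤ f(x, y) + L_f ω(θ)`.
-/

namespace En

lemma posPart_eq_zero_iff {l : ℕ} (v : En l) : _root_.posPart v = 0 ↔ ∀ i, v i ≤ 0 := by
  simp only [_root_.posPart, WithLp.toLp_eq_zero, funext_iff, Pi.zero_apply, max_eq_right_iff]

lemma norm_posPart_le_zero_iff {l : ℕ} (v : En l) : ‖_root_.posPart v‖ ≤ 0 ↔ ∀ i, v i ≤ 0 :=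
  norm_le_zero_iff.trans (posPart_eq_zero_iff v)

lemma continuous_posPart {l : ℕ} : Continuous (_root_.posPart (l := l)) :=
  (PiLp.continuous_toLp 2 _).comp <|
    continuous_pi fun i => (PiLp.continuous_apply 2 _ i).max continuous_const

end En

lemma bddBelow_setOf_exists_eq_apply {α β : Type*} [TopologicalSpace α] [TopologicalSpace β]
    {X : Set α} {Y : Set β} {φ : α × β → ℝ} (hX : IsCompact X) (hY : IsCompact Y)
    (hφ : ContinuousOn φ (X ×ˢ Y)) : BddBelow {v | ∃ x ∈ X, ∃ y ∈ Y, v = φ (x, y)} := by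
  refine ((hX.prod hY).image_of_continuousOn hφ).bddBelow.mono ?_
  rintro _ ⟨x, hx, y, hy, rfl⟩
  exact ⟨(x, y), ⟨hx, hy⟩, rfl⟩

lemma le_add_mul_infDist {E : Type*} [PseudoMetricSpace E] {s : Set E} (hs : s.Nonempty)
    {y : E} {a c L : ℝ} (hL : 0 ≤ L) (h : ∀ w ∈ s, c ≤ a + L * dist y w) :
    c ≤ a + L * Metric.infDist y s := by
  obtain rfl | hL := hL.eq_or_lt
  · obtain ⟨w, hw⟩ := hs
    simpa using h w hw
  have : (c - a) / L ≤ Metric.infDist y s := by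
    have : Nonempty s := hs.to_subtype
    rw [Metric.infDist_eq_iInf]
    exact le_ciInf fun w => (div_le_iff₀' hL).mpr (by linarith [h w w.2])
  linarith [(div_le_iff₀' hL).mp this]

lemma LipOnXY.apply_le_add_mul_dist {n m : ℕ} {φ : En n × En m → ℝ} {L : ℝ}
    {X : Set (En n)} {Y : Set (En m)} (hφ : LipOnXY φ L X Y) {x : En n} {y w : En m}
    (hx : x ∈ X) (hy : y ∈ Y) (hw : w ∈ Y) : φ (x, w) ≤ φ (x, y) + L * dist y w := by
  have hdist : prodDist (x, w) (x, y) = dist y w := by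
    simp [prodDist, Real.sqrt_sq (norm_nonneg _), dist_eq_norm']
  have := hφ (x, w) ⟨hx, hw⟩ (x, y) ⟨hx, hy⟩
  rw [hdist] at this
  linarith [le_abs_self (φ (x, w) - φ (x, y))]

section LowerLevel

variable {n m l : ℕ} {ft : En n × En m → ℝ} {gt : En n × En m → En l} {Y : Set (En m)}
  {μ : ℝ} {x : En n} {z : En m}

lemma Ptilde_eq_of_feasible (hz : ∀ i, gt (x, z) i ≤ 0) : Ptilde ft gt μ x z = ft (x, z) := by
  simp [Ptilde, (En.posPart_eq_zero_iff _).mpr hz]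

lemma continuousOn_Ptilde {X : Set (En n)} (hftc : ContinuousOn ft (X ×ˢ Y))
    (hgtc : ContinuousOn gt (X ×ˢ Y)) (hx : x ∈ X) : ContinuousOn (Ptilde ft gt μ x) Y := by
  have hgx : ContinuousOn (fun z => gt (x, z)) Y := hgtc.uncurry_left (f := Function.curry gt) x hx
  exact (hftc.uncurry_left (f := Function.curry ft) x hx).add <| continuousOn_const.mul <|
    ((continuous_norm.comp En.continuous_posPart).comp_continuousOn hgx).pow 2

lemma exists_feasible_eq_ftStar {X : Set (En n)} (hY : IsCompact Y)
    (hftc : ContinuousOn ft (X ×ˢ Y)) (hgtc : ContinuousOn gt (X ×ˢ Y)) (hx : x ∈ X)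
    (hfeas : ∃ z ∈ Y, ∀ i, gt (x, z) i ≤ 0) :
    ∃ y ∈ Y, (∀ i, gt (x, y) i ≤ 0) ∧ ft (x, y) = ftStar ft gt Y x := by
  have hfx : ContinuousOn (fun z => ft (x, z)) Y := hftc.uncurry_left (f := Function.curry ft) x hx
  have hgx : ContinuousOn (fun z => gt (x, z)) Y := hgtc.uncurry_left (f := Function.curry gt) x hx
  set F := Y ∩ (fun z => _root_.posPart (gt (x, z))) ⁻¹' {0}
  have hF : IsCompact F := hY.of_isClosed_subset
    ((En.continuous_posPart.comp_continuousOn hgx).preimage_isClosed_of_isClosed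
      hY.isClosed isClosed_singleton) inter_subset_left
  have hFne : F.Nonempty := by
    obtain ⟨z, hz, hgz⟩ := hfeas
    exact ⟨z, hz, (En.posPart_eq_zero_iff _).mpr hgz⟩
  obtain ⟨y, ⟨hy, hgy⟩, hymin⟩ := hF.exists_isMinOn hFne (hfx.mono inter_subset_left)
  have hgy : ∀ i, gt (x, y) i ≤ 0 := (En.posPart_eq_zero_iff _).mp hgy
  refine ⟨y, hy, hgy, Eq.symm <| IsLeast.csInf_eq ⟨⟨y, hy, hgy, rfl⟩, ?_⟩⟩
  rintro _ ⟨z, hz, hgz, rfl⟩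
  exact hymin ⟨hz, (En.posPart_eq_zero_iff _).mpr hgz⟩

lemma mem_Sθ_zero {y : En m} (hy : y ∈ Y) (hgy : ∀ i, gt (x, y) i ≤ 0)
    (hval : ft (x, y) = ftStar ft gt Y x) : y ∈ Sθ ft gt Y 0 x := by
  refine show _ ∧ _ ∧ _ from ⟨hy, (En.norm_posPart_le_zero_iff _).mpr hgy, hval.trans ?_⟩
  simp only [ftStar, En.norm_posPart_le_zero_iff]

lemma PtildeMinVal_eq_of_isMinOn (hz : z ∈ Y) (hmin : IsMinOn (Ptilde ft gt μ x) Y z) :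
    PtildeMinVal ft gt Y μ x = Ptilde ft gt μ x z := by
  refine IsLeast.csInf_eq ⟨⟨z, hz, rfl⟩, ?_⟩
  rintro _ ⟨z', hz', rfl⟩
  exact hmin hz'

lemma Ptilde_le_ftStar_of_isMinOn (hmin : IsMinOn (Ptilde ft gt μ x) Y z)
    (hfeas : ∃ z ∈ Y, ∀ i, gt (x, z) i ≤ 0) : Ptilde ft gt μ x z ≤ ftStar ft gt Y x := by
  obtain ⟨z₀, hz₀, hgz₀⟩ := hfeas
  refine le_csInf ⟨_, z₀, hz₀, hgz₀, rfl⟩ ?_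
  rintro _ ⟨z', hz', hgz', rfl⟩
  rw [← Ptilde_eq_of_feasible (ft := ft) (μ := μ) hgz']
  exact hmin hz'

lemma mem_Sθ_of_isMinOn (hμ : 0 ≤ μ) (hz : z ∈ Y) (hmin : IsMinOn (Ptilde ft gt μ x) Y z) :
    z ∈ Sθ ft gt Y ‖posPart (gt (x, z))‖ x := by
  refine show _ ∧ _ ∧ _ from ⟨hz, le_rfl, Eq.symm <| IsLeast.csInf_eq ⟨⟨z, hz, le_rfl, rfl⟩, ?_⟩⟩
  rintro _ ⟨z', hz', hσz', rfl⟩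
  have hpen : Ptilde ft gt μ x z ≤ Ptilde ft gt μ x z' := hmin hz'
  simp only [Ptilde] at hpen
  linarith [mul_le_mul_of_nonneg_left (pow_le_pow_left₀ (norm_nonneg _) hσz' 2) hμ]

lemma isMinOn_of_mem_Sθ (hμ : 0 ≤ μ) (hz : z ∈ Y) (hmin : IsMinOn (Ptilde ft gt μ x) Y z)
    {w : En m} (hw : w ∈ Sθ ft gt Y ‖posPart (gt (x, z))‖ x) :
    IsMinOn (Ptilde ft gt μ x) Y w := by
  have hval : ft (x, w) = ft (x, z) := hw.2.2.trans (mem_Sθ_of_isMinOn hμ hz hmin).2.2.symm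
  intro z' hz'
  have hpen : Ptilde ft gt μ x w ≤ Ptilde ft gt μ x z := by
    simp only [Ptilde, hval]
    gcongr
    exact hw.2.1
  exact hpen.trans (hmin hz')

lemma fStarMu_le_of_isMinOn {f : En n × En m → ℝ} {X : Set (En n)}
    (hfbdd : BddBelow {v | ∃ x ∈ X, ∃ y ∈ Y, v = f (x, y)}) (hx : x ∈ X) (hz : z ∈ Y)
    (hmin : IsMinOn (Ptilde ft gt μ x) Y z) : fStarMu f ft gt X Y μ ≤ f (x, z) := by
  refine csInf_le (hfbdd.mono ?_) ⟨x, hx, z, hz, (PtildeMinVal_eq_of_isMinOn hz hmin).symm, rfl⟩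
  rintro _ ⟨x', hx', y', hy', -, rfl⟩
  exact ⟨x', hx', y', hy', rfl⟩

lemma norm_posPart_le_sqrt_of_isMinOn {X : Set (En n)} (hμ : 0 < μ) (hx : x ∈ X) (hz : z ∈ Y)
    (hmin : IsMinOn (Ptilde ft gt μ x) Y z) (hfeas : ∃ z ∈ Y, ∀ i, gt (x, z) i ≤ 0)
    (hbdd : BddAbove {v | ∃ x ∈ X, v = ftStar ft gt Y x})
    (hftbdd : BddBelow {v | ∃ x ∈ X, ∃ y ∈ Y, v = ft (x, y)}) :
    ‖posPart (gt (x, z))‖ ≤ √(μ⁻¹ * (ftStarHi ft gt X Y - ftLow ft X Y)) := by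
  have hstar : ft (x, z) + μ * ‖posPart (gt (x, z))‖ ^ 2 ≤ ftStar ft gt Y x :=
    Ptilde_le_ftStar_of_isMinOn hmin hfeas
  have hhi : ftStar ft gt Y x ≤ ftStarHi ft gt X Y := le_csSup hbdd ⟨x, hx, rfl⟩
  have hlow : ftLow ft X Y ≤ ft (x, z) := csInf_le hftbdd ⟨x, hx, z, hz, rfl⟩
  rw [← abs_norm]
  refine Real.abs_le_sqrt ((le_inv_mul_iff₀ hμ).mpr ?_)
  linarith

lemma fStarMu_le_add_of_mem_Sθ_zero {f : En n × En m → ℝ} {X : Set (En n)} {Lf θbar θ : ℝ}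
    {ω : ℝ → ℝ} {y : En m} (hfbdd : BddBelow {v | ∃ x ∈ X, ∃ y ∈ Y, v = f (x, y)})
    (hLf : 0 ≤ Lf) (hLipf : LipOnXY f Lf X Y) (hωmono : ∀ a b, 0 ≤ a → a ≤ b → ω a ≤ ω b)
    (hEB : ∀ z ∈ Sθ ft gt Y 0 x, ∀ θ ∈ Icc 0 θbar, Metric.infDist z (Sθ ft gt Y θ x) ≤ ω θ)
    (hμ : 0 ≤ μ) (hx : x ∈ X) (hy : y ∈ Sθ ft gt Y 0 x) (hz : z ∈ Y)
    (hmin : IsMinOn (Ptilde ft gt μ x) Y z) (hσθ : ‖posPart (gt (x, z))‖ ≤ θ) (hθ : θ ≤ θbar) :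
    fStarMu f ft gt X Y μ ≤ f (x, y) + Lf * ω θ := by
  set σ := ‖posPart (gt (x, z))‖
  have hσ : 0 ≤ σ := norm_nonneg _
  have hnear : fStarMu f ft gt X Y μ ≤ f (x, y) + Lf * Metric.infDist y (Sθ ft gt Y σ x) := by
    refine le_add_mul_infDist ⟨z, mem_Sθ_of_isMinOn hμ hz hmin⟩ hLf fun w hw => ?_
    exact (fStarMu_le_of_isMinOn hfbdd hx hw.1 (isMinOn_of_mem_Sθ hμ hz hmin hw)).trans
      (hLipf.apply_le_add_mul_dist hx hy.1 hw.1)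
  calc fStarMu f ft gt X Y μ ≤ f (x, y) + Lf * Metric.infDist y (Sθ ft gt Y σ x) := hnear
    _ ≤ f (x, y) + Lf * ω θ := by
      gcongr
      exact (hEB y hy σ ⟨hσ, hσθ.trans hθ⟩).trans (hωmono σ θ hσ hσθ)

end LowerLevel

theorem stmt10_general {n m l : ℕ}
    (X : Set (En n)) (Y : Set (En m))
    (hXne : X.Nonempty) (hXcpt : IsCompact X)
    (hYne : Y.Nonempty) (hYcpt : IsCompact Y)
    (f ft : En n × En m → ℝ) (gt : En n × En m → En l)
    (hfc : ContinuousOn f (X ×ˢ Y)) (hftc : ContinuousOn ft (X ×ˢ Y))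
    (hgtc : ContinuousOn gt (X ×ˢ Y))
    (hfeas : ∀ x ∈ X, ∃ z ∈ Y, ∀ i, gt (x, z) i ≤ 0)
    (Lf : ℝ) (hLf : 0 ≤ Lf) (hLipf : LipOnXY f Lf X Y)
    -- `f̃*_hi` is finite
    (hbdd : BddAbove {v | ∃ x ∈ X, v = ftStar ft gt Y x})
    (θbar : ℝ) (ω : ℝ → ℝ) (herr : ErrorBound ft gt X Y θbar ω)
    (μ : ℝ) (hμpos : 0 < μ)
    (hμbig : (ftStarHi ft gt X Y - ftLow ft X Y) / θbar ^ 2 ≤ μ) :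
    fStarMu f ft gt X Y μ ≤ fStarC f ft gt X Y +
      Lf * ω (Real.sqrt (μ⁻¹ * (ftStarHi ft gt X Y - ftLow ft X Y))) := by
  obtain ⟨hθbar, -, hωmono, -, hEB⟩ := herr
  have hθ : √(μ⁻¹ * (ftStarHi ft gt X Y - ftLow ft X Y)) ≤ θbar :=
    Real.sqrt_le_left hθbar.le |>.mpr <| (inv_mul_le_iff₀ hμpos).mpr <|
      (div_le_iff₀ (by positivity)).mp hμbig
  obtain ⟨x₀, hx₀⟩ := hXne
  obtain ⟨y₀, hy₀, hgy₀, hval₀⟩ := exists_feasible_eq_ftStar hYcpt hftc hgtc hx₀ (hfeas x₀ hx₀)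
  rw [← sub_le_iff_le_add]
  refine le_csInf ⟨_, x₀, hx₀, y₀, hy₀, hgy₀, hval₀, rfl⟩ ?_
  rintro _ ⟨x, hx, y, hy, hgy, hval, rfl⟩
  obtain ⟨z, hz, hmin⟩ := hYcpt.exists_isMinOn hYne (continuousOn_Ptilde (μ := μ) hftc hgtc hx)
  have hσ := norm_posPart_le_sqrt_of_isMinOn hμpos hx hz hmin (hfeas x hx) hbdd
    (bddBelow_setOf_exists_eq_apply hXcpt hYcpt hftc)
  have hbound := fStarMu_le_add_of_mem_Sθ_zero (bddBelow_setOf_exists_eq_apply hXcpt hYcpt hfc) hLf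
    hLipf hωmono (hEB x hx) hμpos.le hx (mem_Sθ_zero hy hgy hval) hz hmin hσ hθ
  linarith

theorem stmt10 {n m l : ℕ} (hn : 0 < n) (hm : 0 < m) (hl : 0 < l)
    (X : Set (En n)) (Y : Set (En m))
    (hXne : X.Nonempty) (hXcpt : IsCompact X)
    (hYne : Y.Nonempty) (hYcpt : IsCompact Y) (hYconv : Convex ℝ Y)
    (f ft : En n × En m → ℝ) (gt : En n × En m → En l)
    (hfc : ContinuousOn f (X ×ˢ Y)) (hftc : ContinuousOn ft (X ×ˢ Y))
    (hgtc : ContinuousOn gt (X ×ˢ Y))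
    (hftconv : ∀ x ∈ X, ConvexOn ℝ Y fun z => ft (x, z))
    (hgtconv : ∀ x ∈ X, ∀ i, ConvexOn ℝ Y fun z => gt (x, z) i)
    (hfeas : ∀ x ∈ X, ∃ z ∈ Y, ∀ i, gt (x, z) i ≤ 0)
    (Lf : ℝ) (hLf : 0 ≤ Lf) (hLipf : LipOnXY f Lf X Y)
    -- `f̃*_hi` is finite
    (hbdd : BddAbove {v | ∃ x ∈ X, v = ftStar ft gt Y x})
    (θbar : ℝ) (ω : ℝ → ℝ) (herr : ErrorBound ft gt X Y θbar ω)
    (μ : ℝ) (hμpos : 0 < μ)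
    (hμbig : (ftStarHi ft gt X Y - ftLow ft X Y) / θbar ^ 2 ≤ μ) :
    fStarMu f ft gt X Y μ ≤ fStarC f ft gt X Y +
      Lf * ω (Real.sqrt (μ⁻¹ * (ftStarHi ft gt X Y - ftLow ft X Y))) :=
  stmt10_general X Y hXne hXcpt hYne hYcpt f ft gt hfc hftc hgtc hfeas Lf hLf hLipf hbdd θbar ω herr
    μ hμpos hμbig
end
end

section
/- Assume f is L_f-Lipschitz on X × Y, f̃*_hi = sup_{x∈X} f̃*(x) is finite, the error-bound assumption holds with constants θ̄ > 0 and function ω, μ ≥ (f̃*_hi − f̃_low)/θ̄², and the penalized bilevel problem attains its optimal value f*_μ at some feasible point. Let ρ, ε > 0, and let (xε, yε, zε) ∈ X × Y × Y be an ε-optimal solution of the minimax problem min_{(x,y)∈X×Y} max_{z∈Y} P_{ρ,μ}(x,y,z). Then: (i) f(xε,yε) ≤ f* + L_f ω(√(μ⁻¹(f̃*_hi − f̃_low))) + 2ε; (ii) f̃(xε,yε) ≤ f̃*(xε) + ρ⁻¹( f* − f_low + L_f ω(√(μ⁻¹(f̃*_hi − f̃_low))) + 2ε ); and (iii) ‖[g̃(xε,yε)]₊‖²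 ≤ μ⁻¹( f̃*(xε) − f̃_low + ρ⁻¹( f* − f_low + L_f ω(√(μ⁻¹(f̃*_hi − f̃_low))) + 2ε ) ). -/
noncomputable section

open Set

open scoped RealInnerProductSpace

/-! The error bound moves bilevel solutions onto penalized ones. If `ỹ` minimizes `P̃_μ(x,·)`
over `Y` and `θ' = ‖[g̃(x,ỹ)]₊‖`, then `μ θ'² ≤ f̃*(x) - f̃(x,ỹ) ≤ f̃*_hi - f̃_low`, so
`θ' ≤ θ := √(μ⁻¹ (f̃*_hi - f̃_low)) ≤ θ̄`; every point of `S_θ'(x)` also minimizes `P̃_μ(x,·)`, so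
each bilevel solution `(x,y)` lies within `ω(θ)` of a penalized one, and the Lipschitz bound gives
`f*_μ ≤ f* + L_f ω(θ)`. For a penalized solution `(x*,y*)` the inner maximum of `P_{ρ,μ}` is
`f(x*,y*) = f*_μ`, so ε-optimality bounds `max_z P_{ρ,μ}(xε,yε,z)` by `f* + L_f ω(θ) + 2ε`.
Evaluating at `z = yε` gives (i); evaluating at a lower-level solution `z₀` of `xε` bounds
`ρ (P̃_μ(xε,yε) - f̃*(xε))`, which gives (ii) and (iii). -/

lemma ContinuousOn.curry_right {α β γ : Type*} [TopologicalSpace α] [TopologicalSpace β]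
    [TopologicalSpace γ] {φ : α × β → γ} {s : Set α} {t : Set β} (hφ : ContinuousOn φ (s ×ˢ t))
    {a : α} (ha : a ∈ s) : ContinuousOn (fun b => φ (a, b)) t :=
  hφ.uncurry_left (f := Function.curry φ) a ha

lemma ContinuousOn.norm_posPart {α : Type*} [TopologicalSpace α] {l : ℕ} {g : α → En l}
    {s : Set α} (hg : ContinuousOn g s) : ContinuousOn (fun a => ‖posPart (g a)‖) s := by
  have hpos : Continuous (posPart : En l → En l) :=
    (PiLp.continuous_toLp 2 _).comp <| continuous_pi fun i =>
      ((continuous_apply i).comp (PiLp.continuous_ofLp 2 _)).max continuous_const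
  exact (hpos.comp_continuousOn hg).norm

lemma norm_posPart_le_zero_iff {l : ℕ} (v : En l) : ‖posPart v‖ ≤ 0 ↔ ∀ i, v i ≤ 0 := by
  rw [norm_le_zero_iff]
  constructor
  · intro h i
    have hi : max (v i) 0 = 0 := congrArg (fun w : En l => w i) h
    exact hi ▸ le_max_left _ _
  · intro h
    ext i
    exact max_eq_right (h i)

lemma prodDist_mk_left {n m : ℕ} (x : En n) (y z : En m) : prodDist (x, y) (x, z) = dist y z := by
  simp [prodDist, dist_eq_norm]

lemma LipOnXY.le_add_mul_dist {n m : ℕ} {f : En n × En m → ℝ} {L : ℝ} {X : Set (En n)}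
    {Y : Set (En m)} (hf : LipOnXY f L X Y) {x : En n} {y z : En m} (hx : x ∈ X) (hy : y ∈ Y)
    (hz : z ∈ Y) : f (x, z) ≤ f (x, y) + L * dist z y := by
  have h := hf (x, z) ⟨hx, hz⟩ (x, y) ⟨hx, hy⟩
  rw [prodDist_mk_left] at h
  linarith [le_abs_self (f (x, z) - f (x, y))]

lemma fLow_le {n m : ℕ} {f : En n × En m → ℝ} {X : Set (En n)} {Y : Set (En m)}
    (hK : IsCompact (X ×ˢ Y)) (hf : ContinuousOn f (X ×ˢ Y)) {x : En n} {y : En m} (hx : x ∈ X)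
    (hy : y ∈ Y) : fLow f X Y ≤ f (x, y) := by
  obtain ⟨b, hb⟩ := hK.bddBelow_image hf
  refine csInf_le ⟨b, ?_⟩ ⟨x, hx, y, hy, rfl⟩
  rintro _ ⟨a, ha, c, hc, rfl⟩
  exact hb ⟨(a, c), ⟨ha, hc⟩, rfl⟩

lemma le_mul_sq_sqrt_inv_mul {a D μ : ℝ} (hμ : 0 < μ) (h : a ≤ D) :
    a ≤ μ * Real.sqrt (μ⁻¹ * D) ^ 2 := by
  rcases le_or_gt 0 D with hD | hD
  · rwa [Real.sq_sqrt (by positivity), mul_inv_cancel_left₀ hμ.ne']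
  · exact h.trans (hD.le.trans (by positivity))

lemma sqrt_inv_mul_le {D μ θbar : ℝ} (hμ : 0 < μ) (hθbar : 0 < θbar) (h : D / θbar ^ 2 ≤ μ) :
    Real.sqrt (μ⁻¹ * D) ≤ θbar := by
  refine Real.sqrt_le_iff.2 ⟨hθbar.le, (inv_mul_le_iff₀ hμ).2 ?_⟩
  linarith [(div_le_iff₀ (by positivity : (0 : ℝ) < θbar ^ 2)).1 h]

section LowerLevel

variable {n m l : ℕ} {Y : Set (En m)} {ft : En n × En m → ℝ} {gt : En n × En m → En l}
  {x : En n} {μ : ℝ}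

lemma mem_Sθ_zero_iff {y : En m} :
    y ∈ Sθ ft gt Y 0 x ↔ y ∈ Y ∧ (∀ i, gt (x, y) i ≤ 0) ∧ ft (x, y) = ftStar ft gt Y x := by
  simp only [Sθ, ftStar, mem_ofPred_eq, norm_posPart_le_zero_iff]

lemma ptilde_eq_of_feasible {z : En m} (hz : ∀ i, gt (x, z) i ≤ 0) :
    Ptilde ft gt μ x z = ft (x, z) := by
  simp [Ptilde, norm_le_zero_iff.1 ((norm_posPart_le_zero_iff _).2 hz)]

lemma isCompact_relaxedFeasible (hY : IsCompact Y) (hgt : ContinuousOn (fun z => gt (x, z)) Y)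
    (θ : ℝ) : IsCompact (Y ∩ (fun z => ‖posPart (gt (x, z))‖) ⁻¹' Iic θ) :=
  hY.of_isClosed_subset (hgt.norm_posPart.preimage_isClosed_of_isClosed
    hY.isClosed isClosed_Iic) inter_subset_left

lemma isCompact_Sθ (hY : IsCompact Y) (hft : ContinuousOn (fun z => ft (x, z)) Y)
    (hgt : ContinuousOn (fun z => gt (x, z)) Y) (θ : ℝ) : IsCompact (Sθ ft gt Y θ x) := by
  set c := sInf {w | ∃ z' ∈ Y, ‖posPart (gt (x, z'))‖ ≤ θ ∧ w = ft (x, z')}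
  have hS : Sθ ft gt Y θ x = (Y ∩ (fun z => ‖posPart (gt (x, z))‖) ⁻¹' Iic θ) ∩
      (Y ∩ (fun z => ft (x, z)) ⁻¹' {c}) := by
    ext z
    simp only [Sθ, mem_ofPred_eq, mem_inter_iff, mem_preimage, mem_Iic, mem_singleton_iff, c]
    tauto
  rw [hS]
  exact (isCompact_relaxedFeasible hY hgt θ).inter_right
    (hft.preimage_isClosed_of_isClosed hY.isClosed isClosed_singleton)

lemma exists_mem_Sθ (hY : IsCompact Y) (hft : ContinuousOn (fun z => ft (x, z)) Y)
    (hgt : ContinuousOn (fun z => gt (x, z)) Y) {θ : ℝ}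
    (hθ : ∃ z ∈ Y, ‖posPart (gt (x, z))‖ ≤ θ) : ∃ z, z ∈ Sθ ft gt Y θ x := by
  obtain ⟨z, hz, hmin⟩ :=
    (isCompact_relaxedFeasible hY hgt θ).exists_isMinOn hθ (hft.mono inter_subset_left)
  refine ⟨z, hz.1, hz.2, Eq.symm <| IsLeast.csInf_eq ⟨⟨z, hz.1, hz.2, rfl⟩, ?_⟩⟩
  rintro _ ⟨z', hz', hz'θ, rfl⟩
  exact hmin ⟨hz', hz'θ⟩

lemma exists_feasible_ftStar_eq (hY : IsCompact Y) (hft : ContinuousOn (fun z => ft (x, z)) Y)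
    (hgt : ContinuousOn (fun z => gt (x, z)) Y) (hfeas : ∃ z ∈ Y, ∀ i, gt (x, z) i ≤ 0) :
    ∃ z ∈ Y, (∀ i, gt (x, z) i ≤ 0) ∧ ft (x, z) = ftStar ft gt Y x := by
  obtain ⟨z₀, hz₀, hz₀feas⟩ := hfeas
  obtain ⟨z, hz⟩ :=
    exists_mem_Sθ (θ := 0) hY hft hgt ⟨z₀, hz₀, (norm_posPart_le_zero_iff _).2 hz₀feas⟩
  exact ⟨z, mem_Sθ_zero_iff.1 hz⟩

lemma ptilde_le_of_mem_Sθ (hY : IsCompact Y) (hft : ContinuousOn (fun z => ft (x, z)) Y)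
    (hμ : 0 ≤ μ) {w z : En m} (hw : w ∈ Y) (hz : z ∈ Sθ ft gt Y ‖posPart (gt (x, w))‖ x) :
    Ptilde ft gt μ x z ≤ Ptilde ft gt μ x w := by
  obtain ⟨-, hzθ, hzval⟩ := hz
  obtain ⟨b, hb⟩ := hY.bddBelow_image hft
  have hft_le : ft (x, z) ≤ ft (x, w) := by
    rw [hzval]
    refine csInf_le ⟨b, ?_⟩ ⟨w, hw, le_rfl, rfl⟩
    rintro _ ⟨z', hz', -, rfl⟩
    exact hb ⟨z', hz', rfl⟩
  unfold Ptilde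
  gcongr

lemma continuousOn_ptilde (hft : ContinuousOn (fun z => ft (x, z)) Y)
    (hgt : ContinuousOn (fun z => gt (x, z)) Y) : ContinuousOn (Ptilde ft gt μ x) Y :=
  hft.add (continuousOn_const.mul (hgt.norm_posPart.pow 2))

lemma ptildeMinVal_le (hY : IsCompact Y) (hP : ContinuousOn (Ptilde ft gt μ x) Y) {z : En m}
    (hz : z ∈ Y) : PtildeMinVal ft gt Y μ x ≤ Ptilde ft gt μ x z := by
  obtain ⟨b, hb⟩ := hY.bddBelow_image hP
  refine csInf_le ⟨b, ?_⟩ ⟨z, hz, rfl⟩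
  rintro _ ⟨z', hz', rfl⟩
  exact hb ⟨z', hz', rfl⟩

lemma ptildeMinVal_eq_of_isMinOn {z : En m} (hz : z ∈ Y) (hmin : IsMinOn (Ptilde ft gt μ x) Y z) :
    PtildeMinVal ft gt Y μ x = Ptilde ft gt μ x z := by
  refine IsLeast.csInf_eq ⟨⟨z, hz, rfl⟩, ?_⟩
  rintro _ ⟨z', hz', rfl⟩
  exact hmin hz'

lemma isMinOn_of_ptilde_eq_ptildeMinVal (hY : IsCompact Y) (hP : ContinuousOn (Ptilde ft gt μ x) Y)
    {y : En m} (h : Ptilde ft gt μ x y = PtildeMinVal ft gt Y μ x) :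
    IsMinOn (Ptilde ft gt μ x) Y y :=
  fun _ hz => h ▸ ptildeMinVal_le hY hP hz

lemma exists_isMinOn_ptilde_dist_le {θ θbar : ℝ} {ω : ℝ → ℝ} {y : En m} (hY : IsCompact Y)
    (hft : ContinuousOn (fun z => ft (x, z)) Y) (hgt : ContinuousOn (fun z => gt (x, z)) Y)
    (hμ : 0 < μ) (hθ : 0 ≤ θ) (hθbar : θ ≤ θbar)
    (hgap : ∀ z ∈ Y, ftStar ft gt Y x - ft (x, z) ≤ μ * θ ^ 2)
    (hω : ∀ a b, 0 ≤ a → a ≤ b → ω a ≤ ω b)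
    (hEB : ∀ θ ∈ Icc 0 θbar, Metric.infDist y (Sθ ft gt Y θ x) ≤ ω θ)
    (hy : y ∈ Sθ ft gt Y 0 x) :
    ∃ z ∈ Y, IsMinOn (Ptilde ft gt μ x) Y z ∧ dist y z ≤ ω θ := by
  obtain ⟨hyY, hyfeas, hyval⟩ := mem_Sθ_zero_iff.1 hy
  obtain ⟨yt, hyt, hytmin⟩ := hY.exists_isMinOn ⟨y, hyY⟩ (continuousOn_ptilde hft hgt)
  set θ' := ‖posPart (gt (x, yt))‖ with hθ'
  have hθ'θ : θ' ≤ θ := by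
    have hle : Ptilde ft gt μ x yt ≤ ftStar ft gt Y x := by
      simpa [ptilde_eq_of_feasible hyfeas, hyval] using hytmin hyY
    have hsq : μ * θ' ^ 2 ≤ μ * θ ^ 2 := by
      linarith [hgap yt hyt, show Ptilde ft gt μ x yt = ft (x, yt) + μ * θ' ^ 2 from rfl]
    exact (pow_le_pow_iff_left₀ (norm_nonneg _) hθ two_ne_zero).1
      (le_of_mul_le_mul_left hsq hμ)
  obtain ⟨z₁, hz₁⟩ := exists_mem_Sθ hY hft hgt ⟨yt, hyt, le_rfl⟩
  obtain ⟨z, hz, hdist⟩ := (isCompact_Sθ hY hft hgt θ').exists_infDist_eq_dist ⟨z₁, hz₁⟩ y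
  refine ⟨z, hz.1, fun w hw => (ptilde_le_of_mem_Sθ hY hft hμ.le hyt hz).trans (hytmin hw), ?_⟩
  calc dist y z = Metric.infDist y (Sθ ft gt Y θ' x) := hdist.symm
    _ ≤ ω θ' := hEB θ' ⟨norm_nonneg _, hθ'θ.trans hθbar⟩
    _ ≤ ω θ := hω θ' θ (norm_nonneg _) hθ'θ

end LowerLevel

section Minimax

variable {n m l : ℕ} {X : Set (En n)} {Y : Set (En m)} {f ft : En n × En m → ℝ}
  {gt : En n × En m → En l} {ρ μ : ℝ}

lemma fStarMu_le_fStarC_add {L δ : ℝ} (hK : IsCompact (X ×ˢ Y)) (hf : ContinuousOn f (X ×ˢ Y))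
    (hL : 0 ≤ L) (hLip : LipOnXY f L X Y)
    (hne : ∃ x ∈ X, ∃ y, y ∈ Sθ ft gt Y 0 x)
    (hnear : ∀ x ∈ X, ∀ y ∈ Sθ ft gt Y 0 x,
      ∃ z ∈ Y, IsMinOn (Ptilde ft gt μ x) Y z ∧ dist y z ≤ δ) :
    fStarMu f ft gt X Y μ ≤ fStarC f ft gt X Y + L * δ := by
  obtain ⟨x₀, hx₀, y₀, hy₀⟩ := hne
  obtain ⟨hy₀Y, hy₀feas, hy₀val⟩ := mem_Sθ_zero_iff.1 hy₀
  rw [← sub_le_iff_le_add]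
  refine le_csInf ⟨_, x₀, hx₀, y₀, hy₀Y, hy₀feas, hy₀val, rfl⟩ ?_
  rintro _ ⟨x, hx, y, hy, hyfeas, hyval, rfl⟩
  obtain ⟨z, hz, hzmin, hzdist⟩ := hnear x hx y (mem_Sθ_zero_iff.2 ⟨hy, hyfeas, hyval⟩)
  have hmu : fStarMu f ft gt X Y μ ≤ f (x, z) := by
    refine csInf_le ⟨fLow f X Y, ?_⟩
      ⟨x, hx, z, hz, (ptildeMinVal_eq_of_isMinOn hz hzmin).symm, rfl⟩
    rintro _ ⟨a, ha, c, hc, -, rfl⟩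
    exact fLow_le hK hf ha hc
  have hlip := hLip.le_add_mul_dist hx hy hz
  rw [dist_comm] at hlip
  linarith [mul_le_mul_of_nonneg_left hzdist hL]

lemma fStarMu_le_fStarC_add_of_errorBound {L θbar : ℝ} {ω : ℝ → ℝ} (hXne : X.Nonempty)
    (hX : IsCompact X) (hY : IsCompact Y) (hf : ContinuousOn f (X ×ˢ Y))
    (hft : ContinuousOn ft (X ×ˢ Y)) (hgt : ContinuousOn gt (X ×ˢ Y))
    (hfeas : ∀ x ∈ X, ∃ z ∈ Y, ∀ i, gt (x, z) i ≤ 0) (hL : 0 ≤ L) (hLip : LipOnXY f L X Y)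
    (hbdd : BddAbove {v | ∃ x ∈ X, v = ftStar ft gt Y x}) (herr : ErrorBound ft gt X Y θbar ω)
    (hμ : 0 < μ) (hμbig : (ftStarHi ft gt X Y - ftLow ft X Y) / θbar ^ 2 ≤ μ) :
    fStarMu f ft gt X Y μ ≤
      fStarC f ft gt X Y + L * ω (Real.sqrt (μ⁻¹ * (ftStarHi ft gt X Y - ftLow ft X Y))) := by
  obtain ⟨hθbar, -, hω, -, hEB⟩ := herr
  have hK := hX.prod hY
  refine fStarMu_le_fStarC_add hK hf hL hLip ?_ fun x hx y hy => ?_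
  · obtain ⟨x, hx⟩ := hXne
    obtain ⟨z, hz⟩ := exists_feasible_ftStar_eq hY (hft.curry_right hx) (hgt.curry_right hx)
      (hfeas x hx)
    exact ⟨x, hx, z, mem_Sθ_zero_iff.2 hz⟩
  refine exists_isMinOn_ptilde_dist_le hY (hft.curry_right hx) (hgt.curry_right hx) hμ
    (Real.sqrt_nonneg _) (sqrt_inv_mul_le hμ hθbar hμbig) (fun z hz => ?_) hω (hEB x hx y hy) hy
  exact le_mul_sq_sqrt_inv_mul hμ
    (sub_le_sub (le_csSup hbdd ⟨x, hx, rfl⟩) (fLow_le hK hft hx hz))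

lemma prhomu_self (x : En n) (y : En m) : Prhomu f ft gt ρ μ x y y = f (x, y) := by
  simp [Prhomu]

lemma prhomu_le_maxPc (hY : IsCompact Y) {x : En n} (hP : ContinuousOn (Ptilde ft gt μ x) Y)
    (y : En m) {z : En m} (hz : z ∈ Y) : Prhomu f ft gt ρ μ x y z ≤ maxPc f ft gt Y ρ μ x y := by
  have hcont : ContinuousOn (Prhomu f ft gt ρ μ x y) Y :=
    continuousOn_const.add (continuousOn_const.mul (continuousOn_const.sub hP))
  obtain ⟨b, hb⟩ := hY.bddAbove_image hcont
  refine le_csSup ⟨b, ?_⟩ ⟨z, hz, rfl⟩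
  rintro _ ⟨z', hz', rfl⟩
  exact hb ⟨z', hz', rfl⟩

lemma le_maxPc (hY : IsCompact Y) {x : En n} (hP : ContinuousOn (Ptilde ft gt μ x) Y) {y : En m}
    (hy : y ∈ Y) : f (x, y) ≤ maxPc f ft gt Y ρ μ x y :=
  (prhomu_self x y).symm.le.trans (prhomu_le_maxPc hY hP y hy)

lemma maxPc_le_of_isMinOn (hρ : 0 ≤ ρ) {x : En n} {y : En m} (hy : y ∈ Y)
    (hmin : IsMinOn (Ptilde ft gt μ x) Y y) : maxPc f ft gt Y ρ μ x y ≤ f (x, y) := by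
  refine csSup_le ⟨_, y, hy, rfl⟩ ?_
  rintro _ ⟨z, hz, rfl⟩
  exact add_le_of_nonpos_right (mul_nonpos_of_nonneg_of_nonpos hρ (sub_nonpos.2 (hmin hz)))

lemma minimaxValc_le_maxPc (hK : IsCompact (X ×ˢ Y)) (hf : ContinuousOn f (X ×ˢ Y))
    (hY : IsCompact Y) (hP : ∀ x ∈ X, ContinuousOn (Ptilde ft gt μ x) Y) {x : En n} {y : En m}
    (hx : x ∈ X) (hy : y ∈ Y) : minimaxValc f ft gt X Y ρ μ ≤ maxPc f ft gt Y ρ μ x y := by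
  refine csInf_le ⟨fLow f X Y, ?_⟩ ⟨x, hx, y, hy, rfl⟩
  rintro _ ⟨a, ha, c, hc, rfl⟩
  exact (fLow_le hK hf ha hc).trans (le_maxPc hY (hP a ha) hc)

lemma maxPc_le_fStarMu_add_of_epsOptimalc {ε : ℝ} {xs xe : En n} {ys ye ze : En m}
    (hX : IsCompact X) (hY : IsCompact Y) (hf : ContinuousOn f (X ×ˢ Y))
    (hft : ContinuousOn ft (X ×ˢ Y)) (hgt : ContinuousOn gt (X ×ˢ Y)) (hρ : 0 ≤ ρ)
    (hxs : xs ∈ X) (hys : ys ∈ Y) (hmin : Ptilde ft gt μ xs ys = PtildeMinVal ft gt Y μ xs)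
    (hopt : f (xs, ys) = fStarMu f ft gt X Y μ) (heps : epsOptimalc f ft gt X Y ρ μ ε xe ye ze) :
    maxPc f ft gt Y ρ μ xe ye ≤ fStarMu f ft gt X Y μ + 2 * ε := by
  have hP x (hx : x ∈ X) : ContinuousOn (Ptilde ft gt μ x) Y :=
    continuousOn_ptilde (hft.curry_right hx) (hgt.curry_right hx)
  have hminimax := minimaxValc_le_maxPc (ρ := ρ) (hX.prod hY) hf hY hP hxs hys
  have hmaxPc := maxPc_le_of_isMinOn (f := f) hρ hys
    (isMinOn_of_ptilde_eq_ptildeMinVal hY (hP xs hxs) hmin)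
  obtain ⟨heps₁, heps₂⟩ := heps
  linarith

lemma mul_ptilde_sub_ftStar_le {x : En n} {y : En m} {b B : ℝ} (hY : IsCompact Y)
    (hft : ContinuousOn (fun z => ft (x, z)) Y) (hgt : ContinuousOn (fun z => gt (x, z)) Y)
    (hfeas : ∃ z ∈ Y, ∀ i, gt (x, z) i ≤ 0) (hb : b ≤ f (x, y))
    (hB : maxPc f ft gt Y ρ μ x y ≤ B) :
    ρ * (Ptilde ft gt μ x y - ftStar ft gt Y x) ≤ B - b := by
  obtain ⟨z₀, hz₀, hz₀feas, hz₀val⟩ := exists_feasible_ftStar_eq hY hft hgt hfeas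
  have h := (prhomu_le_maxPc hY (continuousOn_ptilde hft hgt) y hz₀).trans hB
  rw [Prhomu, ptilde_eq_of_feasible hz₀feas, hz₀val] at h
  linarith

end Minimax

theorem stmt11_general {n m l : ℕ}
    (X : Set (En n)) (Y : Set (En m))
    (hXne : X.Nonempty) (hXcpt : IsCompact X)
    (hYcpt : IsCompact Y)
    (f ft : En n × En m → ℝ) (gt : En n × En m → En l)
    (hfc : ContinuousOn f (X ×ˢ Y)) (hftc : ContinuousOn ft (X ×ˢ Y))
    (hgtc : ContinuousOn gt (X ×ˢ Y))
    (hfeas : ∀ x ∈ X, ∃ z ∈ Y, ∀ i, gt (x, z) i ≤ 0)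
    (Lf : ℝ) (hLf : 0 ≤ Lf) (hLipf : LipOnXY f Lf X Y)
    -- `f̃*_hi` is finite
    (hbdd : BddAbove {v | ∃ x ∈ X, v = ftStar ft gt Y x})
    (θbar : ℝ) (ω : ℝ → ℝ) (herr : ErrorBound ft gt X Y θbar ω)
    (μ : ℝ) (hμpos : 0 < μ)
    (hμbig : (ftStarHi ft gt X Y - ftLow ft X Y) / θbar ^ 2 ≤ μ)
    -- the penalized bilevel problem attains its optimal value `f*_μ` at a feasible point
    (xstar : En n) (ystar : En m) (hxstar : xstar ∈ X) (hystar : ystar ∈ Y)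
    (hopt1 : Ptilde ft gt μ xstar ystar = PtildeMinVal ft gt Y μ xstar)
    (hopt2 : f (xstar, ystar) = fStarMu f ft gt X Y μ)
    (ρ ε : ℝ) (hρ : 0 < ρ)
    (xe : En n) (ye ze : En m) (hxe : xe ∈ X) (hye : ye ∈ Y)
    (heps : epsOptimalc f ft gt X Y ρ μ ε xe ye ze) :
    f (xe, ye) ≤ fStarC f ft gt X Y +
        Lf * ω (Real.sqrt (μ⁻¹ * (ftStarHi ft gt X Y - ftLow ft X Y))) + 2 * ε ∧
    ft (xe, ye) ≤ ftStar ft gt Y xe +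
        ρ⁻¹ * (fStarC f ft gt X Y - fLow f X Y +
          Lf * ω (Real.sqrt (μ⁻¹ * (ftStarHi ft gt X Y - ftLow ft X Y))) + 2 * ε) ∧
    ‖posPart (gt (xe, ye))‖ ^ 2 ≤
        μ⁻¹ * (ftStar ft gt Y xe - ftLow ft X Y +
          ρ⁻¹ * (fStarC f ft gt X Y - fLow f X Y +
            Lf * ω (Real.sqrt (μ⁻¹ * (ftStarHi ft gt X Y - ftLow ft X Y))) + 2 * ε)) := by
  have hK := hXcpt.prod hYcpt
  have hP : ContinuousOn (Ptilde ft gt μ xe) Y :=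
    continuousOn_ptilde (hftc.curry_right hxe) (hgtc.curry_right hxe)
  have hmax : maxPc f ft gt Y ρ μ xe ye ≤ fStarC f ft gt X Y +
      Lf * ω (Real.sqrt (μ⁻¹ * (ftStarHi ft gt X Y - ftLow ft X Y))) + 2 * ε := by
    linarith [maxPc_le_fStarMu_add_of_epsOptimalc hXcpt hYcpt hfc hftc hgtc hρ.le hxstar hystar
      hopt1 hopt2 heps, fStarMu_le_fStarC_add_of_errorBound (μ := μ) hXne hXcpt hYcpt hfc hftc
      hgtc hfeas hLf hLipf hbdd herr hμpos hμbig]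
  have hpen := mul_ptilde_sub_ftStar_le hYcpt (hftc.curry_right hxe) (hgtc.curry_right hxe)
    (hfeas xe hxe) (fLow_le hK hfc hxe hye) hmax
  rw [← le_div_iff₀' hρ, div_eq_inv_mul] at hpen
  have hPtilde : Ptilde ft gt μ xe ye = ft (xe, ye) + μ * ‖posPart (gt (xe, ye))‖ ^ 2 := rfl
  have hviol : 0 ≤ μ * ‖posPart (gt (xe, ye))‖ ^ 2 := by positivity
  have hftLow : ftLow ft X Y ≤ ft (xe, ye) := fLow_le hK hftc hxe hye
  refine ⟨(le_maxPc hYcpt hP hye).trans hmax, ?_, ?_⟩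
  · linarith
  · rw [le_inv_mul_iff₀ hμpos]
    linarith

theorem stmt11 {n m l : ℕ} (hn : 0 < n) (hm : 0 < m) (hl : 0 < l)
    (X : Set (En n)) (Y : Set (En m))
    (hXne : X.Nonempty) (hXcpt : IsCompact X)
    (hYne : Y.Nonempty) (hYcpt : IsCompact Y) (hYconv : Convex ℝ Y)
    (f ft : En n × En m → ℝ) (gt : En n × En m → En l)
    (hfc : ContinuousOn f (X ×ˢ Y)) (hftc : ContinuousOn ft (X ×ˢ Y))
    (hgtc : ContinuousOn gt (X ×ˢ Y))
    (hftconv : ∀ x ∈ X, ConvexOn ℝ Y fun z => ft (x, z))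
    (hgtconv : ∀ x ∈ X, ∀ i, ConvexOn ℝ Y fun z => gt (x, z) i)
    (hfeas : ∀ x ∈ X, ∃ z ∈ Y, ∀ i, gt (x, z) i ≤ 0)
    (Lf : ℝ) (hLf : 0 ≤ Lf) (hLipf : LipOnXY f Lf X Y)
    -- `f̃*_hi` is finite
    (hbdd : BddAbove {v | ∃ x ∈ X, v = ftStar ft gt Y x})
    (θbar : ℝ) (ω : ℝ → ℝ) (herr : ErrorBound ft gt X Y θbar ω)
    (μ : ℝ) (hμpos : 0 < μ)
    (hμbig : (ftStarHi ft gt X Y - ftLow ft X Y) / θbar ^ 2 ≤ μ)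
    -- the penalized bilevel problem attains its optimal value `f*_μ` at a feasible point
    (xstar : En n) (ystar : En m) (hxstar : xstar ∈ X) (hystar : ystar ∈ Y)
    (hopt1 : Ptilde ft gt μ xstar ystar = PtildeMinVal ft gt Y μ xstar)
    (hopt2 : f (xstar, ystar) = fStarMu f ft gt X Y μ)
    (ρ ε : ℝ) (hρ : 0 < ρ) (hε : 0 < ε)
    (xe : En n) (ye ze : En m) (hxe : xe ∈ X) (hye : ye ∈ Y) (hze : ze ∈ Y)
    (heps : epsOptimalc f ft gt X Y ρ μ ε xe ye ze) :
    f (xe, ye) ≤ fStarC f ft gt X Y +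
        Lf * ω (Real.sqrt (μ⁻¹ * (ftStarHi ft gt X Y - ftLow ft X Y))) + 2 * ε ∧
    ft (xe, ye) ≤ ftStar ft gt Y xe +
        ρ⁻¹ * (fStarC f ft gt X Y - fLow f X Y +
          Lf * ω (Real.sqrt (μ⁻¹ * (ftStarHi ft gt X Y - ftLow ft X Y))) + 2 * ε) ∧
    ‖posPart (gt (xe, ye))‖ ^ 2 ≤
        μ⁻¹ * (ftStar ft gt Y xe - ftLow ft X Y +
          ρ⁻¹ * (fStarC f ft gt X Y - fLow f X Y +
            Lf * ω (Real.sqrt (μ⁻¹ * (ftStarHi ft gt X Y - ftLow ft X Y))) + 2 * ε)) :=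
  stmt11_general X Y hXne hXcpt hYcpt f ft gt hfc hftc hgtc hfeas Lf hLf hLipf hbdd θbar ω herr μ
    hμpos hμbig xstar ystar hxstar hystar hopt1 hopt2 ρ ε hρ xe ye ze hxe hye heps
end
end
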